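/- Let λ ∈ (0,1). Define σ_t := tanh(t/λ + artanh(λ)) and σ_{F,t}² := 1 − (1 − λ²)e^{−2t}. Then (1 − σ_{F,t}²)/(1 − σ_t²) = ((1−λ²)/4)·(e^{−t(1+1/λ) − artanh(λ)} + e^{t(1/λ − 1) + artanh(λ)})², and this ratio tends to infinity as t → ∞. -/

import Mathlib

open Filter

/-- The inverse hyperbolic tangent, artanh(x) = (1/2) log((1+x)/(1−x)). -/
noncomputable def artanh (x : ℝ) : ℝ := (1 / 2) * Real.log ((1 + x) / (1 - x))

/-!
Writing `u = k t + a`, the identity `1 - tanh² u = 4 / (eᵘ + e⁻ᵘ)²` turns the ratio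
`e^{-2t} / (1 - tanh² u)` into `(e^{-t-u} + e^{-t+u})² / 4`, which is the stated closed form
for `k = 1/λ`, `a = artanh λ`. For `λ ∈ (0,1)` the slope `1/λ - 1` of the second exponent is
positive, so the square, and with it the ratio, tends to infinity.
-/

namespace Real

theorem one_sub_tanh_sq (u : ℝ) : 1 - tanh u ^ 2 = 4 / (exp u + exp (-u)) ^ 2 := by
  have hcosh : cosh u ≠ 0 := (cosh_pos u).ne'
  have hsum : exp u + exp (-u) = 2 * cosh u := by rw [cosh_eq]; ring
  rw [tanh_eq_sinh_div_cosh, hsum]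
  field_simp
  linarith [cosh_sq_sub_sinh_sq u]

theorem exp_neg_two_mul_div_one_sub_tanh_sq (k a t : ℝ) :
    exp (-2 * t) / (1 - tanh (t * k + a) ^ 2) =
      1 / 4 * (exp (-t * (1 + k) - a) + exp (t * (k - 1) + a)) ^ 2 := by
  have hlow : exp (-t * (1 + k) - a) = exp (-t) * exp (-(t * k + a)) := by
    rw [← exp_add]; ring_nf
  have hhigh : exp (t * (k - 1) + a) = exp (-t) * exp (t * k + a) := by
    rw [← exp_add]; ring_nf
  have hsq : exp (-2 * t) = exp (-t) ^ 2 := by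
    rw [sq, ← exp_add]; ring_nf
  rw [one_sub_tanh_sq, hlow, hhigh, hsq]
  field_simp
  ring

end Real

theorem tendsto_mul_exp_add_exp_sq_atTop {c k : ℝ} (hc : 0 < c) (hk : 1 < k) (a : ℝ) :
    Tendsto (fun t => c * (Real.exp (-t * (1 + k) - a) + Real.exp (t * (k - 1) + a)) ^ 2)
      atTop atTop := by
  have hexponent : Tendsto (fun t : ℝ => t * (k - 1) + a) atTop atTop :=
    tendsto_atTop_add_const_right _ a (tendsto_id.atTop_mul_const (sub_pos.mpr hk))
  have hsum : Tendsto (fun t => Real.exp (-t * (1 + k) - a) + Real.exp (t * (k - 1) + a))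
      atTop atTop :=
    tendsto_atTop_mono (fun t => le_add_of_nonneg_left (Real.exp_pos _).le)
      (Real.tendsto_exp_atTop.comp hexponent)
  exact ((tendsto_pow_atTop two_ne_zero).comp hsum).const_mul_atTop hc

/-- With σ_t = tanh(t/λ + artanh λ) and σ_{F,t}² = 1 − (1−λ²)e^{−2t},
the ratio (1 − σ_{F,t}²)/(1 − σ_t²) equals the stated explicit expression and
tends to infinity as t → ∞. -/
theorem gaussian_flow_vs_fokker_planck (lam : ℝ) (hlam : lam ∈ Set.Ioo (0 : ℝ) 1)
    (σ σF2 : ℝ → ℝ)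
    (hσ : ∀ t, σ t = Real.tanh (t / lam + artanh lam))
    (hσF2 : ∀ t, σF2 t = 1 - (1 - lam ^ 2) * Real.exp (-2 * t)) :
    (∀ t, (1 - σF2 t) / (1 - (σ t) ^ 2) =
        ((1 - lam ^ 2) / 4) *
          (Real.exp (-t * (1 + 1 / lam) - artanh lam) +
            Real.exp (t * (1 / lam - 1) + artanh lam)) ^ 2) ∧
      Tendsto (fun t => (1 - σF2 t) / (1 - (σ t) ^ 2)) atTop atTop := by
  obtain ⟨hlam_pos, hlam_lt_one⟩ := hlam
  have hratio : ∀ t, (1 - σF2 t) / (1 - (σ t) ^ 2) =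
      ((1 - lam ^ 2) / 4) *
        (Real.exp (-t * (1 + 1 / lam) - artanh lam) +
          Real.exp (t * (1 / lam - 1) + artanh lam)) ^ 2 := by
    intro t
    rw [hσ, hσF2, div_eq_mul_one_div t lam, sub_sub_cancel, mul_div_assoc,
      Real.exp_neg_two_mul_div_one_sub_tanh_sq]
    ring
  refine ⟨hratio, ?_⟩
  have hcoeff : 0 < (1 - lam ^ 2) / 4 := by nlinarith
  have hslope : 1 < 1 / lam := by rw [lt_div_iff₀ hlam_pos]; linarith
  simpa only [hratio] using tendsto_mul_exp_add_exp_sq_atTop hcoeff hslope (artanh lam)
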